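/- Let λ be a partition of n and μ₁ = λ(c₁→a₁), μ₂ = λ(c₂→a₂) two distinct neighbors of λ in the partition graph G_n. Then λ, μ₁, μ₂ span a triangle in G_n if and only if c₁ = c₂ or a₁ = a₂. -/

import Mathlib

open Finset

/-- A partition of `n`: a finitely supported weakly decreasing sequence of
row lengths (rows indexed from `0`) summing to `n`. -/
structure NPartition (n : ℕ) where
  parts : ℕ →₀ ℕ
  antitone : ∀ ⦃i j : ℕ⦄, i ≤ j → parts j ≤ parts i
  total : parts.sum (fun _ m => m) = n

namespace NPartition

variable {n : ℕ}

/-- The multiset of (positive) row lengths of a partition. -/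
def rows (f : NPartition n) : Multiset ℕ := f.parts.support.val.map f.parts

/-- `conj f j` is the number of rows of length at least `j + 1`; i.e. the length of
the `(j+1)`-st column (columns indexed from `0`), the conjugate partition `λ'`. -/
def conj (f : NPartition n) (j : ℕ) : ℕ :=
  (f.rows.filter (fun m => j + 1 ≤ m)).card

/-- The height `h(λ) = ∑ i · λ_i`, rows indexed from `1`. -/
def height (f : NPartition n) : ℕ :=
  ∑ i ∈ f.parts.support, (i + 1) * f.parts i

/-- Row `r` (0-indexed) of `f` carries a removable corner: removing its last cell
again yields a partition. -/
def IsRemovableRow (f : NPartition n) (r : ℕ) : Prop :=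
  f.parts (r + 1) < f.parts r

/-- Row `r` (0-indexed) of `f` carries an addable corner: adding a cell at the end
of this row again yields a partition. -/
def IsAddableRow (f : NPartition n) (r : ℕ) : Prop :=
  r = 0 ∨ f.parts r < f.parts (r - 1)

/-- The multiset of rows obtained from `f` by removing one cell from the corner in
row `rc` and adding one cell at the corner in row `ra` (zero rows discarded);
reordering is built in since this is a multiset. -/
def transferRows (f : NPartition n) (rc ra : ℕ) : Multiset ℕ :=
  ((f.rows.erase (f.parts rc)).erase (f.parts ra))
    + Multiset.filter (fun m => 0 < m) {f.parts rc - 1, f.parts ra + 1}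

/-- `IsTransfer f g rc ra` : `g = λ(c → a)` is obtained from `f = λ` by the admissible
transfer of one cell from the removable corner `c` in row `rc` to the addable corner
`a` in row `ra ≠ rc`, followed by reordering, and `g ≠ f`. -/
def IsTransfer (f g : NPartition n) (rc ra : ℕ) : Prop :=
  f.IsRemovableRow rc ∧ f.IsAddableRow ra ∧ rc ≠ ra ∧ g ≠ f ∧
    g.rows = f.transferRows rc ra

/-- Adjacency in the partition graph `G_n`. -/
def Adj (f g : NPartition n) : Prop :=
  (∃ rc ra, IsTransfer f g rc ra) ∨ (∃ rc ra, IsTransfer g f rc ra)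

/-- The one-row partition `(n)`. -/
noncomputable def onerow (n : ℕ) : NPartition n where
  parts := Finsupp.single 0 n
  antitone := by
    intro i j hij
    by_cases hi : i = 0
    · subst hi
      by_cases hj : j = 0 <;> simp [Finsupp.single_apply, eq_comm, hj]
    · have hj : j ≠ 0 := by omega
      simp [Finsupp.single_apply, eq_comm, hi, hj]
  total := Finsupp.sum_single_index rfl

end NPartition

/-!
Read a partition through its conjugate `λ'`. Moving the last cell of a row of length `c` to the
end of a row of length `a` takes a cell from column `c - 1` to column `a`, so `λ(c → a)` has
conjugate `λ' - e_{c-1} + e_a`; conversely every change `λ' ↦ λ' - e_u + e_v` (`u ≠ v`) between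
conjugates of partitions is such a transfer, and the corners `c`, `a` are determined by `u`, `v`.
For two neighbours `μᵢ` with `μᵢ' = λ' - e_{uᵢ} + e_{vᵢ}` one gets
`μ₂' - μ₁' = e_{u₁} - e_{v₁} - e_{u₂} + e_{v₂}`, which has the form `-e_p + e_q` exactly when
`u₁ = u₂` or `v₁ = v₂`.
-/

section IsUnitShift

variable {α : Type*} [DecidableEq α]

/-- `y = x - e_u + e_v`, written additively to avoid truncated subtraction. -/
def IsUnitShift (x y : α → ℕ) (u v : α) : Prop :=
  ∀ j, y j + (if j = u then 1 else 0) = x j + (if j = v then 1 else 0)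

variable {x y z : α → ℕ} {u v w : α}

theorem IsUnitShift.symm (h : IsUnitShift x y u v) : IsUnitShift y x v u :=
  fun j => (h j).symm

theorem IsUnitShift.right_unique (hy : IsUnitShift x y u v) (hz : IsUnitShift x z u v) :
    y = z :=
  funext fun j => by have := hy j; have := hz j; omega

theorem IsUnitShift.eq_of_same (h : IsUnitShift x y u u) : y = x :=
  funext fun j => by have := h j; omega

theorem IsUnitShift.of_left_eq (hy : IsUnitShift x y u v) (hz : IsUnitShift x z u w) :
    IsUnitShift y z v w :=
  fun j => by have := hy j; have := hz j; omega

theorem IsUnitShift.of_right_eq (hy : IsUnitShift x y u w) (hz : IsUnitShift x z v w) :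
    IsUnitShift y z v u :=
  fun j => by have := hy j; have := hz j; omega

theorem IsUnitShift.eq_or_eq_of_isUnitShift {u' v' p q : α} (hy : IsUnitShift x y u v)
    (hz : IsUnitShift x z u' v') (h : IsUnitShift y z p q) (huv : u ≠ v) (huv' : u' ≠ v') :
    u = u' ∨ v = v' := by
  by_contra! ⟨hu, hv⟩
  have key : ∀ j, (if j = u then 1 else 0) + (if j = v' then 1 else 0) + (if j = p then 1 else 0)
      = (if j = v then 1 else 0) + (if j = u' then 1 else 0) + (if j = q then (1 : ℕ) else 0) :=
    fun j => by have := hy j; have := hz j; have := h j; omega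
  have huq : u = q := by by_contra; have := key u; split_ifs at this <;> simp_all
  have hv'q : v' = q := by by_contra; have := key v'; split_ifs at this <;> simp_all
  subst huq hv'q
  have := key v'
  simp only [if_neg huv, if_neg hu, if_true] at this
  omega

end IsUnitShift

section Nat

variable {x y : ℕ → ℕ} {u v : ℕ}

theorem IsUnitShift.succ_lt (h : IsUnitShift x y u v) (huv : u ≠ v) (hy : Antitone y) :
    x (u + 1) < x u := by
  have hu := h u
  have hsucc := h (u + 1)
  have := hy (Nat.le_add_right u 1)
  split_ifs at hu hsucc <;> omega

theorem IsUnitShift.lt_pred (h : IsUnitShift x y u v) (huv : u ≠ v) (hy : Antitone y)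
    (hv : v ≠ 0) : x v < x (v - 1) := by
  have hv' := h v
  have hpred := h (v - 1)
  have := hy (Nat.sub_le v 1)
  split_ifs at hv' hpred <;> omega

end Nat

theorem Multiset.countP_eq_countP_erase_add {α : Type*} [DecidableEq α] {p : α → Prop}
    [DecidablePred p] {M : Multiset α} {a : α} (ha : a ∈ M) :
    M.countP p = (M.erase a).countP p + if p a then 1 else 0 := by
  conv_lhs => rw [← Multiset.cons_erase ha]
  exact Multiset.countP_cons (p := p) a _

theorem Multiset.count_succ_add_countP (M : Multiset ℕ) (j : ℕ) :
    M.count (j + 1) + M.countP (fun m => j + 1 + 1 ≤ m) = M.countP (fun m => j + 1 ≤ m) := by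
  induction M using Multiset.induction with
  | empty => simp
  | cons a M ih =>
    simp only [Multiset.count_cons, Multiset.countP_cons]
    split_ifs <;> omega

theorem Multiset.eq_of_countP_le_eq {M N : Multiset ℕ} (hM : ∀ m ∈ M, 0 < m)
    (hN : ∀ m ∈ N, 0 < m)
    (h : ∀ j, M.countP (fun m => j + 1 ≤ m) = N.countP (fun m => j + 1 ≤ m)) : M = N := by
  ext m
  cases m with
  | zero =>
    rw [Multiset.count_eq_zero_of_notMem (fun h0 => (hM 0 h0).false),
      Multiset.count_eq_zero_of_notMem (fun h0 => (hN 0 h0).false)]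
  | succ j =>
    have hM' := M.count_succ_add_countP j
    have hN' := N.count_succ_add_countP j
    have := h j
    have := h (j + 1)
    omega

theorem Finset.eq_range_card_of_isLowerSet {S : Finset ℕ} (h : IsLowerSet (S : Set ℕ)) :
    S = Finset.range S.card := by
  refine (Finset.eq_of_subset_of_card_le (fun i hi => ?_) (by simp)).symm
  rw [Finset.mem_range] at hi
  by_contra hiS
  have hS : S ⊆ Finset.range i := fun s hs =>
    Finset.mem_range.mpr (lt_of_not_ge fun hsi => hiS (h hsi hs))
  have := Finset.card_le_card hS
  simp only [Finset.card_range] at this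
  omega

namespace NPartition

variable {n : ℕ} {f g : NPartition n}

theorem ext_parts (h : f.parts = g.parts) : f = g := by
  cases f; cases g; congr

theorem pos_of_mem_rows {m : ℕ} (hm : m ∈ f.rows) : 0 < m := by
  obtain ⟨i, hi, rfl⟩ := Multiset.mem_map.mp hm
  exact Nat.pos_of_ne_zero (Finsupp.mem_support_iff.mp hi)

theorem conj_eq_countP (f : NPartition n) (j : ℕ) :
    f.conj j = f.rows.countP (fun m => j + 1 ≤ m) :=
  (Multiset.countP_eq_card_filter _ _).symm

theorem lt_conj_iff {i j : ℕ} : i < f.conj j ↔ j + 1 ≤ f.parts i := by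
  set S := f.parts.support.filter (fun i => j + 1 ≤ f.parts i)
  have hconj : f.conj j = S.card := by
    rw [conj, rows, Multiset.filter_map, Multiset.card_map]
    rfl
  have hS : IsLowerSet (S : Set ℕ) := fun a k hk ha => by
    simp only [S, Finset.coe_filter, Finsupp.mem_support_iff, Set.mem_ofPred_eq] at ha ⊢
    have := f.antitone hk
    omega
  have hmem : i ∈ S ↔ j + 1 ≤ f.parts i := by
    simp only [S, Finset.mem_filter, Finsupp.mem_support_iff]
    omega
  rw [← hmem, hconj, ← Finset.mem_range, ← Finset.eq_range_card_of_isLowerSet hS]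

theorem conj_antitone (f : NPartition n) : Antitone f.conj := fun _ _ h =>
  Multiset.card_le_card (Multiset.monotone_filter_right _ fun _ hm => by omega)

theorem conj_injective : Function.Injective (conj : NPartition n → ℕ → ℕ) := by
  intro f g h
  apply ext_parts
  ext i
  have key : ∀ k, k + 1 ≤ f.parts i ↔ k + 1 ≤ g.parts i := fun k => by
    rw [← lt_conj_iff, ← lt_conj_iff, h]
  have := key (f.parts i - 1)
  have := key (g.parts i - 1)
  omega

theorem IsRemovableRow.parts_pos {r : ℕ} (h : f.IsRemovableRow r) : 0 < f.parts r :=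
  Nat.zero_lt_of_lt h

theorem IsRemovableRow.eq_iff {r s : ℕ} (hr : f.IsRemovableRow r) (hs : f.IsRemovableRow s) :
    r = s ↔ f.parts r = f.parts s := by
  refine ⟨congrArg f.parts, fun he => ?_⟩
  rcases lt_trichotomy r s with h | h | h
  · have := f.antitone (show _ + 1 ≤ _ from h); rw [IsRemovableRow] at hr; omega
  · exact h
  · have := f.antitone (show _ + 1 ≤ _ from h); rw [IsRemovableRow] at hs; omega

theorem IsAddableRow.eq_iff {r s : ℕ} (hr : f.IsAddableRow r) (hs : f.IsAddableRow s) :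
    r = s ↔ f.parts r = f.parts s := by
  refine ⟨congrArg f.parts, fun he => ?_⟩
  rcases lt_trichotomy r s with h | h | h
  · have := f.antitone (Nat.le_sub_one_of_lt h); rw [IsAddableRow] at hs; omega
  · exact h
  · have := f.antitone (Nat.le_sub_one_of_lt h); rw [IsAddableRow] at hr; omega

theorem isRemovableRow_conj_sub_one {j : ℕ} (hj : 0 < f.conj j) :
    f.IsRemovableRow (f.conj j - 1) := by
  have hlast := lt_conj_iff.mp (Nat.sub_one_lt_of_lt hj)
  have hnext : ¬ j + 1 ≤ f.parts (f.conj j - 1 + 1) := fun h => by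
    have := lt_conj_iff.mpr h; omega
  rw [IsRemovableRow]
  omega

theorem parts_conj_sub_one {j : ℕ} (hj : f.conj (j + 1) < f.conj j) :
    f.parts (f.conj j - 1) = j + 1 := by
  have hle := lt_conj_iff.mp (show f.conj j - 1 < f.conj j by omega)
  have hge : ¬ j + 1 + 1 ≤ f.parts (f.conj j - 1) := fun h => by
    have := lt_conj_iff.mpr h; omega
  omega

theorem isAddableRow_conj (j : ℕ) : f.IsAddableRow (f.conj j) := by
  rcases Nat.eq_zero_or_pos (f.conj j) with h | h
  · exact Or.inl h
  · have hprev := lt_conj_iff.mp (Nat.sub_one_lt_of_lt h)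
    have hlast : ¬ j + 1 ≤ f.parts (f.conj j) := fun h => by
      have := lt_conj_iff.mpr h; omega
    exact Or.inr (by omega)

theorem parts_conj {j : ℕ} (hj : j = 0 ∨ f.conj j < f.conj (j - 1)) :
    f.parts (f.conj j) = j := by
  have hle : ¬ j + 1 ≤ f.parts (f.conj j) := fun h => by
    have := lt_conj_iff.mpr h; omega
  rcases hj with rfl | hj
  · omega
  · have := lt_conj_iff.mp hj
    omega

theorem parts_mem_rows {r : ℕ} (hr : f.parts r ≠ 0) : f.parts r ∈ f.rows :=
  Multiset.mem_map_of_mem _ (Finsupp.mem_support_iff.mpr hr)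

theorem rows_erase_parts {r : ℕ} (hr : f.parts r ≠ 0) :
    f.rows.erase (f.parts r) = (f.parts.support.erase r).val.map f.parts := by
  have hmem : r ∈ f.parts.support.val := Finsupp.mem_support_iff.mpr hr
  rw [rows, Finset.erase_val, ← Multiset.cons_erase hmem, Multiset.map_cons,
    Multiset.erase_cons_head, Multiset.cons_erase hmem]

theorem parts_mem_rows_erase {r s : ℕ} (hrs : r ≠ s) (hr : f.parts r ≠ 0) (hs : f.parts s ≠ 0) :
    f.parts s ∈ f.rows.erase (f.parts r) := by
  rw [rows_erase_parts hr]
  exact Multiset.mem_map_of_mem _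
    (Finset.mem_erase.mpr ⟨hrs.symm, Finsupp.mem_support_iff.mpr hs⟩)

theorem pos_of_mem_transferRows {rc ra m : ℕ} (hm : m ∈ f.transferRows rc ra) : 0 < m := by
  rcases Multiset.mem_add.mp hm with hm | hm
  · exact pos_of_mem_rows (Multiset.mem_of_mem_erase (Multiset.mem_of_mem_erase hm))
  · exact (Multiset.mem_filter.mp hm).2

theorem isUnitShift_conj_transferRows {rc ra : ℕ} (hc : f.parts rc ≠ 0) (hne : rc ≠ ra) :
    IsUnitShift f.conj (fun j => (f.transferRows rc ra).countP (fun m => j + 1 ≤ m))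
      (f.parts rc - 1) (f.parts ra) := by
  intro j
  let E := (f.rows.erase (f.parts rc)).erase (f.parts ra)
  have hnew : (f.transferRows rc ra).countP (fun m => j + 1 ≤ m) = E.countP (fun m => j + 1 ≤ m)
      + (if j + 1 ≤ f.parts rc - 1 then 1 else 0) + (if j + 1 ≤ f.parts ra + 1 then 1 else 0) := by
    simp only [transferRows, E, Multiset.countP_add, Multiset.countP_filter,
      Multiset.insert_eq_cons, Multiset.countP_cons, ← Multiset.cons_zero, Multiset.countP_zero]
    split_ifs <;> omega
  have hc_row := Multiset.countP_eq_countP_erase_add (p := fun m => j + 1 ≤ m) (parts_mem_rows hc)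
  have ha_row : (f.rows.erase (f.parts rc)).countP (fun m => j + 1 ≤ m)
      = E.countP (fun m => j + 1 ≤ m) + if j + 1 ≤ f.parts ra then 1 else 0 := by
    by_cases ha : f.parts ra = 0
    · have h0 : f.parts ra ∉ f.rows.erase (f.parts rc) := fun h =>
        (pos_of_mem_rows (Multiset.mem_of_mem_erase h)).ne' ha
      rw [show E = _ from Multiset.erase_of_notMem h0, if_neg (by omega), add_zero]
    · exact Multiset.countP_eq_countP_erase_add (parts_mem_rows_erase hne hc ha)
  rw [conj_eq_countP]
  dsimp only
  split_ifs at hnew hc_row ha_row ⊢ <;> omega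

theorem IsTransfer.isUnitShift_conj {rc ra : ℕ} (h : IsTransfer f g rc ra) :
    IsUnitShift f.conj g.conj (f.parts rc - 1) (f.parts ra) := by
  obtain ⟨hrc, -, hne, -, hrows⟩ := h
  have hshift := isUnitShift_conj_transferRows hrc.parts_pos.ne' hne
  rwa [← hrows, ← funext (conj_eq_countP g)] at hshift

theorem IsTransfer.parts_sub_one_ne {rc ra : ℕ} (h : IsTransfer f g rc ra) :
    f.parts rc - 1 ≠ f.parts ra := fun he =>
  h.2.2.2.1 (conj_injective (he ▸ h.isUnitShift_conj).eq_of_same)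

theorem exists_isTransfer_of_isUnitShift {u v : ℕ} (huv : u ≠ v)
    (h : IsUnitShift f.conj g.conj u v) : ∃ rc ra, IsTransfer f g rc ra := by
  have hu : f.conj (u + 1) < f.conj u := h.succ_lt huv g.conj_antitone
  have hv : v = 0 ∨ f.conj v < f.conj (v - 1) :=
    (eq_or_ne v 0).imp_right (h.lt_pred huv g.conj_antitone)
  have hc : f.parts (f.conj u - 1) = u + 1 := parts_conj_sub_one hu
  have ha : f.parts (f.conj v) = v := parts_conj hv
  have hrc_ne_ra : f.conj u - 1 ≠ f.conj v := by
    have hgu := h u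
    have hgv := h v
    rcases Nat.lt_or_gt_of_ne huv with hlt | hlt
    · have := g.conj_antitone hlt.le
      split_ifs at hgu hgv <;> omega
    · have := f.conj_antitone hlt.le
      omega
  have hgf : g ≠ f := by
    rintro rfl
    simpa [huv] using h u
  refine ⟨f.conj u - 1, f.conj v, isRemovableRow_conj_sub_one (Nat.zero_lt_of_lt hu),
    isAddableRow_conj v, hrc_ne_ra, hgf, ?_⟩
  refine Multiset.eq_of_countP_le_eq (fun _ => pos_of_mem_rows) (fun _ => pos_of_mem_transferRows)
    (congrFun ?_)
  have htr := isUnitShift_conj_transferRows (ne_of_eq_of_ne hc u.succ_ne_zero) hrc_ne_ra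
  rw [hc, ha, Nat.add_sub_cancel] at htr
  exact (funext (conj_eq_countP g)).symm.trans (h.right_unique htr)

theorem exists_isTransfer_iff :
    (∃ rc ra, IsTransfer f g rc ra) ↔ ∃ u v, u ≠ v ∧ IsUnitShift f.conj g.conj u v :=
  ⟨fun ⟨_, _, h⟩ => ⟨_, _, h.parts_sub_one_ne, h.isUnitShift_conj⟩,
    fun ⟨_, _, huv, h⟩ => exists_isTransfer_of_isUnitShift huv h⟩

theorem adj_iff : Adj f g ↔ ∃ u v, u ≠ v ∧ IsUnitShift f.conj g.conj u v := by
  rw [Adj, exists_isTransfer_iff, exists_isTransfer_iff]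
  exact ⟨fun h => h.elim id fun ⟨u, v, huv, h⟩ => ⟨v, u, huv.symm, h.symm⟩, Or.inl⟩

theorem IsTransfer.adj {rc ra : ℕ} (h : IsTransfer f g rc ra) : Adj f g :=
  Or.inl ⟨rc, ra, h⟩

theorem adj_iff_of_isUnitShift {g₁ g₂ : NPartition n} {u₁ v₁ u₂ v₂ : ℕ}
    (h₁ : IsUnitShift f.conj g₁.conj u₁ v₁) (h₂ : IsUnitShift f.conj g₂.conj u₂ v₂)
    (huv₁ : u₁ ≠ v₁) (huv₂ : u₂ ≠ v₂) (hne : g₁ ≠ g₂) :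
    Adj g₁ g₂ ↔ u₁ = u₂ ∨ v₁ = v₂ := by
  rw [adj_iff]
  constructor
  · rintro ⟨_, _, -, h⟩
    exact h₁.eq_or_eq_of_isUnitShift h₂ h huv₁ huv₂
  · rintro (rfl | rfl)
    · refine ⟨v₁, v₂, fun hv => hne ?_, h₁.of_left_eq h₂⟩
      exact conj_injective (h₁.right_unique (hv ▸ h₂))
    · refine ⟨u₂, u₁, fun hu => hne ?_, h₁.of_right_eq h₂⟩
      exact conj_injective (h₁.right_unique (hu ▸ h₂))

end NPartition

/-- Let `μ₁ = λ(c₁ → a₁)` and `μ₂ = λ(c₂ → a₂)` be two distinct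
neighbors of `λ` in `G_n`.  Then `λ, μ₁, μ₂` span a triangle in `G_n` if and only if
`c₁ = c₂` or `a₁ = a₂`. -/
theorem triangle_classification {n : ℕ} (f g₁ g₂ : NPartition n) (rc₁ ra₁ rc₂ ra₂ : ℕ)
    (h₁ : NPartition.IsTransfer f g₁ rc₁ ra₁)
    (h₂ : NPartition.IsTransfer f g₂ rc₂ ra₂)
    (hne : g₁ ≠ g₂) :
    (NPartition.Adj f g₁ ∧ NPartition.Adj f g₂ ∧ NPartition.Adj g₁ g₂) ↔
      (rc₁ = rc₂ ∨ ra₁ = ra₂) := by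
  rw [and_iff_right h₁.adj, and_iff_right h₂.adj,
    NPartition.adj_iff_of_isUnitShift h₁.isUnitShift_conj h₂.isUnitShift_conj
      h₁.parts_sub_one_ne h₂.parts_sub_one_ne hne,
    h₁.1.eq_iff h₂.1, h₁.2.1.eq_iff h₂.2.1]
  have := h₁.1.parts_pos
  have := h₂.1.parts_pos
  omega
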